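/- arXiv:1006.3413 — 3 statements merged into one kernel-verified Lean document; each statement's English description precedes it below -/
import Mathlib

section
/- For every prime p ≥ 5 and every integer n ≥ 1, there is no integer e with ρ(2n−1) < e < ρ(2n) such that (2p²−2)·(e+1) ≡ 2p−2 (mod 2p^{2n}). (This is the arithmetic fact, from the proof of Lemma 7.8 of Ausoni–Rognes, that no class u_n λ₂ · μ₂^i (tμ₂)^e with v_p(i) = 2n−1 and ρ(2n−1) < e < ρ(2n) has the same total degree as y = (tμ₂)^{ρ(2n−1)} μ₂^j with v_p(j) = 2n−2.) -/
/-!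
Put `T = ∑_{j<n} p^{2j}`, so that `(p² - 1) T = p^{2n} - 1`, `ρ(2n) = p² T` and
`ρ(2n-1) = (1 - p) T + p^{2n}`. As `p² - 1` is invertible modulo `p^{2n}`, the congruence says
exactly `e + 1 ≡ (1 - p) T (mod p^{2n})`, i.e. `e ≡ ρ(2n-1) - 1 (mod p^{2n})`. The least such `e`
above `ρ(2n-1)` is `ρ(2n-1) + p^{2n} - 1 = ρ(2n) + p^{2n} - p T`, and `p T ≤ p^{2n}`.
-/

/-- The Ausoni–Rognes numerical function ρ (as a function of the prime `p` and
the argument `m`): `ρ(2k−1) = ∑_{i=0}^{2k} (−1)^i p^{2k−i}` and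
`ρ(2k) = ∑_{j=1}^{k} p^{2j}`, so that `ρ(0) = 0`. -/
def rho (p m : ℕ) : ℤ :=
  if m % 2 = 1 then ∑ i ∈ Finset.range (m + 2), (-1 : ℤ) ^ i * (p : ℤ) ^ (m + 1 - i)
  else ∑ j ∈ Finset.range (m / 2), (p : ℤ) ^ (2 * (j + 1))

open Finset

lemma sum_range_neg_one_pow_mul_pow_two_mul_sub {R : Type*} [CommRing R] (x : R) (n : ℕ) :
    ∑ i ∈ range (2 * n + 1), (-1) ^ i * x ^ (2 * n - i)
      = (1 - x) * ∑ j ∈ range n, (x ^ 2) ^ j + x ^ (2 * n) := by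
  induction n with
  | zero => simp
  | succ n ih =>
    have hshift : ∀ i, (-1 : R) ^ (i + 2) * x ^ (2 * (n + 1) - (i + 2))
        = (-1) ^ i * x ^ (2 * n - i) := fun i => by
      rw [show 2 * (n + 1) - (i + 2) = 2 * n - i by omega]
      ring
    rw [show 2 * (n + 1) + 1 = 2 * n + 1 + 1 + 1 by ring, sum_range_succ', sum_range_succ']
    simp only [hshift, ih, sum_range_succ]
    rw [show 2 * (n + 1) - (0 + 1) = 2 * n + 1 by omega, Nat.sub_zero]
    ring

lemma rho_two_mul (p n : ℕ) : rho p (2 * n) = (p : ℤ) ^ 2 * ∑ j ∈ range n, ((p : ℤ) ^ 2) ^ j := by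
  rw [rho, if_neg (by omega), show 2 * n / 2 = n by omega, mul_sum]
  exact sum_congr rfl fun j _ => by ring

lemma rho_two_mul_sub_one (p : ℕ) {n : ℕ} (hn : 1 ≤ n) :
    rho p (2 * n - 1) = (1 - p) * ∑ j ∈ range n, ((p : ℤ) ^ 2) ^ j + (p : ℤ) ^ (2 * n) := by
  rw [rho, if_pos (by omega), show 2 * n - 1 + 2 = 2 * n + 1 by omega,
    show 2 * n - 1 + 1 = 2 * n by omega, sum_range_neg_one_pow_mul_pow_two_mul_sub]

lemma modEq_of_sq_sub_one_mul_modEq {P a : ℤ} {n : ℕ}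
    (h : (P ^ 2 - 1) * a ≡ P - 1 [ZMOD P ^ (2 * n)]) :
    a ≡ (1 - P) * ∑ j ∈ range n, (P ^ 2) ^ j [ZMOD P ^ (2 * n)] := by
  have hcop : IsCoprime (P ^ (2 * n)) (P ^ 2 - 1) := IsCoprime.pow_left ⟨P, -1, by ring⟩
  have hgeom : (P ^ 2 - 1) * ((1 - P) * ∑ j ∈ range n, (P ^ 2) ^ j)
      = P - 1 - P ^ (2 * n) * (P - 1) := by
    have := geom_sum_mul (P ^ 2) n
    rw [← pow_mul] at this
    linear_combination (1 - P) * this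
  have hmul : (P ^ 2 - 1) * a ≡ (P ^ 2 - 1) * ((1 - P) * ∑ j ∈ range n, (P ^ 2) ^ j)
      [ZMOD P ^ (2 * n)] := by
    rw [hgeom]
    exact h.trans (Int.modEq_sub_modulus_mul_iff.mpr .rfl)
  rw [Int.modEq_iff_dvd, ← mul_sub] at hmul
  exact Int.modEq_iff_dvd.mpr (hcop.dvd_of_dvd_mul_left hmul)

lemma mul_geom_sum_sq_le {P : ℤ} (hP : 2 ≤ P) (n : ℕ) :
    P * ∑ j ∈ range n, (P ^ 2) ^ j ≤ P ^ (2 * n) := by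
  induction n with
  | zero => simp
  | succ n ih =>
    have hpow : 0 ≤ P ^ (2 * n) := by positivity
    rw [sum_range_succ, mul_add, ← pow_mul, show 2 * (n + 1) = 2 * n + 2 by ring, pow_add]
    nlinarith [mul_nonneg hpow (show 0 ≤ P ^ 2 - P - 1 by nlinarith)]

lemma not_modEq_of_lt_of_lt {a b m : ℤ} (hlow : b < a) (hhigh : a < b + m) :
    ¬ a ≡ b [ZMOD m] := by
  intro h
  obtain ⟨k, hk⟩ := Int.modEq_iff_dvd.mp h.symm
  have hk0 : 0 < k := by nlinarith
  nlinarith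

theorem no_e_lemma_7_8_a_general (p : ℕ) (h5 : 5 ≤ p)
    (n : ℕ) (hn : 1 ≤ n) :
    ¬ ∃ e : ℤ, rho p (2 * n - 1) < e ∧ e < rho p (2 * n) ∧
      (2 * (p : ℤ) ^ 2 - 2) * (e + 1) ≡ 2 * (p : ℤ) - 2 [ZMOD 2 * (p : ℤ) ^ (2 * n)] := by
  rintro ⟨e, hlow, hhigh, hcong⟩
  set P : ℤ := (p : ℤ)
  set T := ∑ j ∈ range n, (P ^ 2) ^ j
  have hP : 2 ≤ P := by omega
  have hgeom : T * (P ^ 2 - 1) = P ^ (2 * n) - 1 := by rw [geom_sum_mul, ← pow_mul]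
  have hmod : e + 1 ≡ (1 - P) * T [ZMOD P ^ (2 * n)] := by
    refine modEq_of_sq_sub_one_mul_modEq (Int.ModEq.mul_left_cancel' two_ne_zero ?_)
    convert hcong using 1 <;> ring
  rw [rho_two_mul_sub_one p hn] at hlow
  rw [rho_two_mul] at hhigh
  refine not_modEq_of_lt_of_lt (b := (1 - P) * T + P ^ (2 * n)) ?_ ?_
    (hmod.trans (Int.modEq_add_modulus_iff.mpr .rfl))
  · linarith
  · linarith [mul_geom_sum_sq_le hP n]

theorem no_e_lemma_7_8_a (p : ℕ) (hp : p.Prime) (h5 : 5 ≤ p)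
    (n : ℕ) (hn : 1 ≤ n) :
    ¬ ∃ e : ℤ, rho p (2 * n - 1) < e ∧ e < rho p (2 * n) ∧
      (2 * (p : ℤ) ^ 2 - 2) * (e + 1) ≡ 2 * (p : ℤ) - 2 [ZMOD 2 * (p : ℤ) ^ (2 * n)] :=
  no_e_lemma_7_8_a_general p h5 n hn
end

section
/- For every prime p ≥ 5 and every integer n ≥ 1, there is no integer e with ρ(2n−1) < e < ρ(2n) such that 2p + (2p²−2)·(e+1) ≡ 2p−2 (mod 2p^{2n}). (This is the arithmetic fact, from the proof of Lemma 7.8 of Ausoni–Rognes, ruling out classes ε̄₁ λ₂ · μ₂^i (tμ₂)^e with v_p(i) = 2n−1 in the total degree of y = (tμ₂)^{ρ(2n−1)} μ₂^j with v_p(j) = 2n−2.) -/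
private lemma rho_odd (p m : ℕ) :
    rho p (2*m+1) = ∑ j ∈ Finset.range (2*m+3), (-(p:ℤ))^j := by
  rw [rho, if_pos (by omega)]
  rw [← Finset.sum_range_reflect]
  apply Finset.sum_congr rfl
  intro i hi
  simp only [Finset.mem_range] at hi
  rw [show 2*m+1+2-1-i = 2*m+2-i from by omega,
      show 2*m+1+1-(2*m+2-i) = i from by omega]
  have e1 : ((-1:ℤ))^(2*m+2-i) * (-1)^i = 1 := by
    rw [← pow_add, show 2*m+2-i+i = 2*(m+1) from by omega, pow_mul]; norm_num
  have e2 : ((-1:ℤ))^i * (-1)^i = 1 := by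
    rw [← pow_add, show i+i = 2*i from by omega, pow_mul]; norm_num
  have e3 : ((-1:ℤ))^(2*m+2-i) = (-1)^i :=
    mul_right_cancel₀ (pow_ne_zero i (by norm_num)) (e1.trans e2.symm)
  rw [e3, neg_pow]
  ring

private lemma rho_odd_mul (p m : ℕ) :
    ((p:ℤ)+1) * rho p (2*m+1) = (p:ℤ)^(2*m+3) + 1 := by
  have hg := geom_sum_mul (-(p:ℤ)) (2*m+3)
  rw [← rho_odd p m] at hg
  have hodd : (-(p:ℤ))^(2*m+3) = -((p:ℤ)^(2*m+3)) :=
    Odd.neg_pow ⟨m+1, by ring⟩ _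
  rw [hodd] at hg
  linear_combination -hg

private lemma rho_even (p m : ℕ) :
    rho p (2*m) = (∑ j ∈ Finset.range m, ((p:ℤ)^2)^j) * (p:ℤ)^2 := by
  rw [rho, if_neg (by omega), show 2*m/2 = m from by omega, Finset.sum_mul]
  apply Finset.sum_congr rfl
  intro j _
  rw [show 2*(j+1) = 2*j+2 from by ring, pow_add, pow_mul]

private lemma rho_even_mul (p m : ℕ) :
    ((p:ℤ)^2 - 1) * rho p (2*m) = (p:ℤ)^(2*m+2) - (p:ℤ)^2 := by
  rw [rho_even]
  have hg := geom_sum_mul ((p:ℤ)^2) m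
  have : ((p:ℤ)^2)^m = (p:ℤ)^(2*m) := by rw [← pow_mul, mul_comm]
  rw [this] at hg
  linear_combination (p:ℤ)^2 * hg

theorem no_e_lemma_7_8_b (p : ℕ) (hp : p.Prime) (h5 : 5 ≤ p)
    (n : ℕ) (hn : 1 ≤ n) :
    ¬ ∃ e : ℤ, rho p (2 * n - 1) < e ∧ e < rho p (2 * n) ∧
      2 * (p : ℤ) + (2 * (p : ℤ) ^ 2 - 2) * (e + 1) ≡ 2 * (p : ℤ) - 2
        [ZMOD 2 * (p : ℤ) ^ (2 * n)] := by
  rintro ⟨e, h1, h2, h3⟩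
  obtain ⟨m, rfl⟩ : ∃ m, n = m + 1 := ⟨n - 1, by omega⟩
  set q : ℤ := (p : ℤ) with hq
  have hq5 : (5:ℤ) ≤ q := by rw [hq]; exact_mod_cast h5
  rw [show 2*(m+1) - 1 = 2*m+1 from by omega] at h1
  rw [show 2*(m+1) = 2*m+2 from by ring] at h2 h3
  set A := rho p (2*m+1) with hA
  set B := rho p (2*m) with hB
  -- C = rho p (2*m+2) = B + q^(2m+2)
  have hC : rho p (2*m+2) = B + q^(2*m+2) := by
    rw [hB, rho, rho, if_neg (by omega), if_neg (by omega),
        show (2*m+2)/2 = m+1 from by omega, show 2*m/2 = m from by omega,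
        Finset.sum_range_succ, show 2*(m+1) = 2*m+2 from by ring]
  have hAm : (q+1) * A = q^(2*m+3) + 1 := rho_odd_mul p m
  have hBm : (q^2 - 1) * B = q^(2*m+2) - q^2 := rho_even_mul p m
  rw [hC] at h2
  -- powers
  have hX : q^2 ≤ q^(2*m+2) := pow_le_pow_right₀ (by linarith) (by omega)
  have hX3 : q^(2*m+3) = q * q^(2*m+2) := by rw [← pow_succ']
  -- B ≤ A
  have hkey : (q+1)*(q^2-1)*(A-B)
      = q^3*(q^(2*m+2)) - 2*q*(q^(2*m+2)) - q^(2*m+2) + 2*q^2 + q^3 - 1 := by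
    linear_combination (q^2-1)*hAm - (q+1)*hBm + (q^2-1)*hX3
  have hBA : B ≤ A := by
    by_contra hcon
    push_neg at hcon
    have h6 : (q+1)*(q^2-1)*(A-B) ≤ 0 :=
      mul_nonpos_of_nonneg_of_nonpos (by nlinarith) (by linarith)
    have h9 : (q^3 - 2*q - 1) * q^2 ≤ (q^3 - 2*q - 1) * q^(2*m+2) :=
      mul_le_mul_of_nonneg_left hX (by nlinarith)
    have h10 : 0 < q^3*(q^2-1) + (q^2-1) :=
      add_pos (mul_pos (pow_pos (by linarith) 3) (by nlinarith)) (by nlinarith)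
    nlinarith [h9, hq5, h10]
  -- divisibility
  have hdvd := h3.dvd
  obtain ⟨t, ht⟩ := hdvd
  have h7 : (2:ℤ)*((q^2-1)*(e-B)) = 2*(q^(2*m+2)*(-t-1)) := by
    linear_combination -ht - 2*hBm
  have h8 : (q^2-1)*(e-B) = q^(2*m+2)*(-t-1) :=
    mul_left_cancel₀ two_ne_zero h7
  have hcop : IsCoprime (q^(2*m+2)) (q^2 - 1) :=
    IsCoprime.pow_left ⟨q, -1, by ring⟩
  have hdvd3 : q^(2*m+2) ∣ (e - B) :=
    hcop.dvd_of_dvd_mul_left ⟨-t-1, h8⟩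
  have hpos : 0 < e - B := by linarith
  have := Int.le_of_dvd hpos hdvd3
  linarith
end

section
/- For every prime p ≥ 5 and every integer n ≥ 1, there is no integer e with 0 ≤ e < p^{2n} − (p^{2n−1} + p^{2n−3} + ⋯ + p³ + p) such that (2p²−2)·e ≡ 2p (mod 2p^{2n}). (This is the arithmetic fact, from the proof of Lemma 7.9 of Ausoni–Rognes, ruling out classes u_{n+1} · t^j (tμ₂)^e as sources of a differential hitting z = (tμ₂)^{ρ(2n−1)} t^i with v_p(i) = 2n.) -/
lemma telescope (p : ℕ) (n : ℕ) :
    ((p : ℤ) ^ 2 - 1) * ∑ k ∈ Finset.range n, (p : ℤ) ^ (2 * k + 1) =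
      (p : ℤ) ^ (2 * n + 1) - p := by
  induction n with
  | zero => simp
  | succ m ih => rw [Finset.sum_range_succ, mul_add, ih]; ring

theorem no_e_lemma_7_9_a (p : ℕ) (hp : p.Prime) (h5 : 5 ≤ p)
    (n : ℕ) (hn : 1 ≤ n) :
    ¬ ∃ e : ℤ, 0 ≤ e ∧
      e < (p : ℤ) ^ (2 * n) - ∑ k ∈ Finset.range n, (p : ℤ) ^ (2 * k + 1) ∧
      (2 * (p : ℤ) ^ 2 - 2) * e ≡ 2 * (p : ℤ) [ZMOD 2 * (p : ℤ) ^ (2 * n)] := by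
  rintro ⟨e, he0, heB, hcong⟩
  set S : ℤ := ∑ k ∈ Finset.range n, (p : ℤ) ^ (2 * k + 1) with hS
  have hp0 : (0 : ℤ) < (p : ℤ) := by exact_mod_cast hp.pos
  have hSpos : 0 < S := by
    refine Finset.sum_pos (fun k _ => by positivity) ?_
    simpa [Finset.nonempty_range_iff] using (by omega : n ≠ 0)
  have hdvd : (2 : ℤ) * (p : ℤ) ^ (2 * n) ∣ 2 * (p : ℤ) - (2 * (p : ℤ) ^ 2 - 2) * e :=
    (Int.modEq_iff_dvd.mp hcong)
  have h1 : (p : ℤ) ^ (2 * n) ∣ (p : ℤ) - ((p : ℤ) ^ 2 - 1) * e := by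
    rcases hdvd with ⟨c, hc⟩
    exact ⟨c, by linarith⟩
  have h2 : (p : ℤ) ^ (2 * n) ∣ ((p : ℤ) ^ 2 - 1) * (e - ((p : ℤ) ^ (2 * n) - S)) := by
    rcases h1 with ⟨c, hc⟩
    refine ⟨-c - ((p : ℤ) ^ 2 - 1) + p, ?_⟩
    have hkey := telescope p n
    rw [← hS] at hkey
    linear_combination -hc + hkey
  have hcop : IsCoprime ((p : ℤ) ^ (2 * n)) ((p : ℤ) ^ 2 - 1) :=
    IsCoprime.pow_left ⟨(p : ℤ), -1, by ring⟩
  have h3 : (p : ℤ) ^ (2 * n) ∣ e - ((p : ℤ) ^ (2 * n) - S) :=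
    hcop.dvd_of_dvd_mul_left h2
  have hne : e - ((p : ℤ) ^ (2 * n) - S) < 0 := by linarith
  have habs : |e - ((p : ℤ) ^ (2 * n) - S)| < (p : ℤ) ^ (2 * n) := by
    rw [abs_of_neg hne]; linarith
  have := Int.eq_zero_of_abs_lt_dvd h3 habs
  omega
end
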